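/- Let r be a natural number. The number of phase-equivalence classes of elements of F(r+1) is at most (m·(n²−n)/d) times the number of phase-equivalence classes of elements of F(r), where F(r) is the set of matrices implementable by a circuit with exactly r CX gates. -/

import Mathlib

open Matrix

noncomputable section

/-- ω = exp(2πi/m). -/
def omega (m : ℕ) : ℂ := Complex.exp (2 * Real.pi * Complex.I / m)

/-- X_i : the permutation matrix of the map x ↦ Function.update x i (x i + 1). -/
def Xn (n : ℕ) (i : Fin n) : Matrix (Fin n → ZMod 2) (Fin n → ZMod 2) ℂ :=
  Matrix.of fun x y => if x = Function.update y i (y i + 1) then 1 else 0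

/-- T_i : the diagonal matrix whose (x,x) entry is ω^((x i).val). -/
def Tn (m n : ℕ) (i : Fin n) : Matrix (Fin n → ZMod 2) (Fin n → ZMod 2) ℂ :=
  Matrix.diagonal fun x => omega m ^ (x i).val

/-- CX_{i,j} : the permutation matrix of the map x ↦ Function.update x j (x j + x i). -/
def CXn (n : ℕ) (i j : Fin n) : Matrix (Fin n → ZMod 2) (Fin n → ZMod 2) ℂ :=
  Matrix.of fun x y => if x = Function.update y j (y j + y i) then 1 else 0

/-- A gate of a CX-circuit: some X_i, some power of some T_i, or some CX_{i,j} with i ≠ j. -/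
inductive GateCX (n : ℕ) where
  | X (i : Fin n)
  | Tpow (i : Fin n) (l : ℕ)
  | CX (i j : Fin n) (h : i ≠ j)

/-- The matrix of a gate. -/
def GateCX.toMatrix (m : ℕ) {n : ℕ} : GateCX n → Matrix (Fin n → ZMod 2) (Fin n → ZMod 2) ℂ
  | .X i => Xn n i
  | .Tpow i l => Tn m n i ^ l
  | .CX i j _ => CXn n i j

/-- Whether a gate is a CX gate. -/
def GateCX.isCX {n : ℕ} : GateCX n → Bool
  | .CX _ _ _ => true
  | _ => false

/-- F(r) : the set of matrices implementable by a circuit with exactly r CX gates. -/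
def Fset (m n r : ℕ) : Set (Matrix (Fin n → ZMod 2) (Fin n → ZMod 2) ℂ) :=
  {U | ∃ L : List (GateCX n), (L.map (GateCX.toMatrix m)).prod = U ∧
    L.countP (fun g => g.isCX) = r}

/-- Two matrices are phase-equivalent if they differ by a nonzero scalar. -/
def PhaseEq {α : Type*} (U V : Matrix α α ℂ) : Prop := ∃ c : ℂ, c ≠ 0 ∧ U = c • V


/-!
Cut a circuit with `r + 1` CX gates at its first CX gate: `U = A * CX_{i,j} * W`, with `A`
CX-free and `W ∈ F(r)`. Every gate of `A` can be moved to the right of `CX_{i,j}`, leaving behind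
only a phase and a power of `T_j`: `X_j T_j^l = ω^l T_j^{(m-1)l} X_j`, `X_i CX_{i,j} =
CX_{i,j} X_i X_j`, and the other gates commute. Since `ω ^ (2m/d) = 1`, also
`T_j^{m/d} CX_{i,j} = CX_{i,j} T_i^{m/d} T_j^{m/d}`, so the power of `T_j` can be taken below
`m/d`. Hence every class in `F(r+1)` is that of some `T_j^l CX_{i,j} W` with `l < m/d`, `i ≠ j`
and `W ∈ F(r)`.
-/

open Function

section FunMatrix

variable {α R : Type*} [DecidableEq α] [NonAssocSemiring R]

def funMatrix (σ : α → α) : Matrix α α R := of fun x y => if x = σ y then 1 else 0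

lemma funMatrix_mul_funMatrix [Fintype α] (σ τ : α → α) :
    funMatrix σ * funMatrix τ = (funMatrix (σ ∘ τ) : Matrix α α R) := by
  ext x z
  rw [mul_apply, Finset.sum_eq_single (τ z)]
  · simp [funMatrix]
  · intro y _ hy
    simp [funMatrix, hy]
  · simp

lemma funMatrix_id : funMatrix id = (1 : Matrix α α R) := by
  ext x y
  simp [funMatrix, one_apply]

lemma diagonal_mul_funMatrix [Fintype α] (D : α → R) (σ : α → α) :
    diagonal D * funMatrix σ = funMatrix σ * diagonal (D ∘ σ) := by
  ext x y
  by_cases h : x = σ y <;> simp [funMatrix, h]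

end FunMatrix

variable {m n : ℕ}

lemma omega_isPrimitiveRoot (hm : 0 < m) : IsPrimitiveRoot (omega m) m :=
  Complex.isPrimitiveRoot_exp m hm.ne'

lemma omega_ne_zero (m : ℕ) : omega m ≠ 0 := Complex.exp_ne_zero _

lemma Xn_eq_funMatrix (i : Fin n) : Xn n i = funMatrix fun x => update x i (x i + 1) := rfl

lemma CXn_eq_funMatrix (i j : Fin n) :
    CXn n i j = funMatrix fun x => update x j (x j + x i) := rfl

lemma Tn_pow (i : Fin n) (l : ℕ) :
    Tn m n i ^ l = diagonal fun x => omega m ^ ((x i).val * l) := by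
  rw [Tn, diagonal_pow]
  congr 1
  funext x
  simp [pow_mul]

lemma Tn_commute_Tn (i k : Fin n) : Commute (Tn m n i) (Tn m n k) := by
  simp only [Tn, Commute, SemiconjBy, diagonal_mul_diagonal, mul_comm]

lemma Xn_commute_Tn {k j : Fin n} (hkj : k ≠ j) : Commute (Xn n k) (Tn m n j) := by
  rw [Commute, SemiconjBy, Tn, Xn_eq_funMatrix, diagonal_mul_funMatrix]
  congr 2
  funext x
  simp [update_of_ne hkj.symm]

lemma Tn_commute_CXn {k i j : Fin n} (hkj : k ≠ j) : Commute (Tn m n k) (CXn n i j) := by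
  rw [Commute, SemiconjBy, Tn, CXn_eq_funMatrix, diagonal_mul_funMatrix]
  congr 2
  funext x
  simp [update_of_ne hkj]

lemma Xn_mul_Tn_pow_self (hm : 0 < m) (j : Fin n) (l : ℕ) :
    Xn n j * Tn m n j ^ l = omega m ^ l • (Tn m n j ^ ((m - 1) * l) * Xn n j) := by
  rw [Tn_pow, Tn_pow, Xn_eq_funMatrix, diagonal_mul_funMatrix, ← mul_smul_comm,
    ← diagonal_smul]
  congr 2
  funext x
  have hω : omega m ^ l * omega m ^ ((m - 1) * l) = 1 := by
    rw [← pow_add, show l + (m - 1) * l = m * l by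
      conv_rhs => rw [← Nat.sub_add_cancel hm]
      ring, pow_mul, (omega_isPrimitiveRoot hm).pow_eq_one, one_pow]
  rcases (by decide : ∀ a : ZMod 2, a = 0 ∨ a = 1) (x j) with h | h <;>
    simp [h, hω, show (1 + 1 : ZMod 2) = 0 from rfl, show (1 : ZMod 2).val = 1 from rfl]

lemma Xn_commute_CXn {k i j : Fin n} (hki : k ≠ i) (hkj : k ≠ j) :
    Commute (Xn n k) (CXn n i j) := by
  rw [Commute, SemiconjBy, Xn_eq_funMatrix, CXn_eq_funMatrix, funMatrix_mul_funMatrix,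
    funMatrix_mul_funMatrix]
  congr 1
  funext x t
  simp only [Function.comp_apply, update_apply]
  grind

lemma Xn_commute_CXn_target {i j : Fin n} (hij : i ≠ j) : Commute (Xn n j) (CXn n i j) := by
  rw [Commute, SemiconjBy, Xn_eq_funMatrix, CXn_eq_funMatrix, funMatrix_mul_funMatrix,
    funMatrix_mul_funMatrix]
  congr 1
  funext x t
  simp only [Function.comp_apply, update_apply]
  grind

lemma Xn_mul_CXn_control {i j : Fin n} (hij : i ≠ j) :
    Xn n i * CXn n i j = CXn n i j * (Xn n i * Xn n j) := by
  simp only [Xn_eq_funMatrix, CXn_eq_funMatrix, funMatrix_mul_funMatrix]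
  congr 1
  funext x t
  simp only [Function.comp_apply, update_apply]
  grind

lemma CXn_mul_self {i j : Fin n} (hij : i ≠ j) : CXn n i j * CXn n i j = 1 := by
  rw [CXn_eq_funMatrix, funMatrix_mul_funMatrix, ← funMatrix_id]
  congr 1
  funext x t
  simp only [Function.comp_apply, update_apply, id]
  grind

lemma Tn_pow_mul_CXn {a : ℕ} (ha : omega m ^ (2 * a) = 1) (i j : Fin n) :
    Tn m n j ^ a * CXn n i j = CXn n i j * (Tn m n i ^ a * Tn m n j ^ a) := by
  simp only [Tn_pow, diagonal_mul_diagonal]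
  rw [CXn_eq_funMatrix, diagonal_mul_funMatrix]
  congr 2
  funext x
  simp only [Function.comp_apply, update_self, ← pow_add, ZMod.val_add]
  rw [show (x i).val * a + (x j).val * a = ((x j).val + (x i).val) * a by ring]
  conv_rhs => rw [← Nat.mod_add_div ((x j).val + (x i).val) 2]
  rw [add_mul, pow_add, mul_right_comm 2, pow_mul (omega m) (2 * a), ha, one_pow, mul_one]

section Circuits

variable {r s : ℕ} {U V A : Matrix (Fin n → ZMod 2) (Fin n → ZMod 2) ℂ}

lemma one_mem_Fset_zero : (1 : Matrix (Fin n → ZMod 2) (Fin n → ZMod 2) ℂ) ∈ Fset m n 0 :=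
  ⟨[], rfl, rfl⟩

lemma mul_mem_Fset (hU : U ∈ Fset m n r) (hV : V ∈ Fset m n s) :
    U * V ∈ Fset m n (r + s) := by
  obtain ⟨L, rfl, rfl⟩ := hU
  obtain ⟨L', rfl, rfl⟩ := hV
  exact ⟨L ++ L', by simp, List.countP_append⟩

lemma mul_mem_Fset_of_mem_Fset_zero (hA : A ∈ Fset m n 0) (hV : V ∈ Fset m n r) :
    A * V ∈ Fset m n r := by
  simpa using mul_mem_Fset hA hV

lemma GateCX.toMatrix_mem_Fset_zero {g : GateCX n} (hg : g.isCX = false) :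
    g.toMatrix m ∈ Fset m n 0 :=
  ⟨[g], by simp, by simp [hg]⟩

lemma Xn_mem_Fset_zero (k : Fin n) : Xn n k ∈ Fset m n 0 :=
  GateCX.toMatrix_mem_Fset_zero (g := .X k) rfl

lemma Tn_pow_mem_Fset_zero (k : Fin n) (p : ℕ) : Tn m n k ^ p ∈ Fset m n 0 :=
  GateCX.toMatrix_mem_Fset_zero (g := .Tpow k p) rfl

lemma CXn_mem_Fset_one {i j : Fin n} (hij : i ≠ j) : CXn n i j ∈ Fset m n 1 :=
  ⟨[.CX i j hij], by simp [GateCX.toMatrix], rfl⟩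

lemma CXn_mul_mem_Fset_succ {i j : Fin n} (hij : i ≠ j) (hV : V ∈ Fset m n r) :
    CXn n i j * V ∈ Fset m n (r + 1) := by
  simpa [add_comm] using mul_mem_Fset (CXn_mem_Fset_one hij) hV

lemma exists_eq_mul_CXn_mul_of_mem_Fset_succ (hU : U ∈ Fset m n (r + 1)) :
    ∃ A ∈ Fset m n 0, ∃ i j, i ≠ j ∧ ∃ W ∈ Fset m n r, U = A * CXn n i j * W := by
  obtain ⟨L, rfl, hL⟩ := hU
  induction L with
  | nil => simp at hL
  | cons g L ih =>
    cases hg : g.isCX with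
    | true =>
      obtain ⟨i, j, hij, rfl⟩ : ∃ i j hij, g = .CX i j hij := by
        cases g <;> simp_all [GateCX.isCX]
      exact ⟨1, one_mem_Fset_zero, i, j, hij, _, ⟨L, rfl, by simpa [GateCX.isCX] using hL⟩,
        by simp [GateCX.toMatrix]⟩
    | false =>
      obtain ⟨A, hA, i, j, hij, W, hW, hLW⟩ := ih (by simpa [hg] using hL)
      exact ⟨g.toMatrix m * A,
        mul_mem_Fset_of_mem_Fset_zero (GateCX.toMatrix_mem_Fset_zero hg) hA,
        i, j, hij, W, hW, by simp [hLW, mul_assoc]⟩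

end Circuits

section NormalForm

variable {r : ℕ} {i j : Fin n} {U A : Matrix (Fin n → ZMod 2) (Fin n → ZMod 2) ℂ}

lemma exists_gate_mul_Tn_pow_mul_CXn (hm : 0 < m) (hij : i ≠ j) {g : GateCX n}
    (hg : g.isCX = false) (l : ℕ) :
    ∃ c : ℂ, c ≠ 0 ∧ ∃ l', ∃ B ∈ Fset m n 0,
      g.toMatrix m * Tn m n j ^ l * CXn n i j = c • (Tn m n j ^ l' * CXn n i j * B) := by
  rcases g with k | ⟨k, p⟩ | _
  · by_cases hkj : k = j
    · subst hkj
      refine ⟨omega m ^ l, pow_ne_zero _ (omega_ne_zero m), (m - 1) * l, Xn n k,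
        Xn_mem_Fset_zero k, ?_⟩
      rw [GateCX.toMatrix, Xn_mul_Tn_pow_self hm, smul_mul_assoc, mul_assoc, mul_assoc,
        (Xn_commute_CXn_target hij).eq]
    by_cases hki : k = i
    · subst hki
      refine ⟨1, one_ne_zero, l, Xn n k * Xn n j,
        mul_mem_Fset_of_mem_Fset_zero (Xn_mem_Fset_zero k) (Xn_mem_Fset_zero j), ?_⟩
      rw [GateCX.toMatrix, one_smul, ((Xn_commute_Tn hkj).pow_right l).eq, mul_assoc,
        Xn_mul_CXn_control hij, mul_assoc]
    · refine ⟨1, one_ne_zero, l, Xn n k, Xn_mem_Fset_zero k, ?_⟩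
      rw [GateCX.toMatrix, one_smul, ((Xn_commute_Tn hkj).pow_right l).eq, mul_assoc,
        (Xn_commute_CXn hki hkj).eq, mul_assoc]
  · by_cases hkj : k = j
    · subst hkj
      exact ⟨1, one_ne_zero, p + l, 1, one_mem_Fset_zero, by simp [GateCX.toMatrix, pow_add]⟩
    · refine ⟨1, one_ne_zero, l, Tn m n k ^ p, Tn_pow_mem_Fset_zero k p, ?_⟩
      rw [GateCX.toMatrix, one_smul, ((Tn_commute_Tn k j).pow_pow p l).eq, mul_assoc,
        ((Tn_commute_CXn hkj).pow_left p).eq, mul_assoc]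
  · simp [GateCX.isCX] at hg

lemma exists_mul_CXn_eq_smul (hm : 0 < m) (hij : i ≠ j) (hA : A ∈ Fset m n 0) :
    ∃ c : ℂ, c ≠ 0 ∧ ∃ l, ∃ B ∈ Fset m n 0,
      A * CXn n i j = c • (Tn m n j ^ l * CXn n i j * B) := by
  obtain ⟨L, rfl, hL⟩ := hA
  induction L with
  | nil => exact ⟨1, one_ne_zero, 0, 1, one_mem_Fset_zero, by simp⟩
  | cons g L ih =>
    have hg : g.isCX = false := by
      by_contra h
      simp [h] at hL
    obtain ⟨c, hc, l, B, hB, hLB⟩ := ih (by simpa [hg] using hL)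
    obtain ⟨c', hc', l', B', hB', hgB'⟩ := exists_gate_mul_Tn_pow_mul_CXn hm hij hg l
    refine ⟨c * c', mul_ne_zero hc hc', l', B' * B, mul_mem_Fset_of_mem_Fset_zero hB' hB, ?_⟩
    calc ((g :: L).map (GateCX.toMatrix m)).prod * CXn n i j
        = c • (g.toMatrix m * Tn m n j ^ l * CXn n i j * B) := by
          simp [mul_assoc, hLB]
      _ = (c * c') • (Tn m n j ^ l' * CXn n i j * (B' * B)) := by
          rw [hgB', smul_mul_assoc, smul_smul, mul_assoc]

lemma dvd_two_mul_div_gcd_two (m : ℕ) : m ∣ 2 * (m / Nat.gcd m 2) := by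
  conv_lhs => rw [← Nat.div_mul_cancel (Nat.gcd_dvd_left m 2)]
  rw [mul_comm 2]
  exact Nat.mul_dvd_mul_left _ (Nat.gcd_dvd_right m 2)

lemma exists_Tn_pow_mul_CXn_eq_mod (hm : 0 < m) (i j : Fin n) (l : ℕ) :
    ∃ B ∈ Fset m n 0,
      Tn m n j ^ l * CXn n i j = Tn m n j ^ (l % (m / Nat.gcd m 2)) * CXn n i j * B := by
  set K := m / Nat.gcd m 2
  set a := K * (l / K)
  have ha : omega m ^ (2 * a) = 1 := by
    rw [(omega_isPrimitiveRoot hm).pow_eq_one_iff_dvd, ← mul_assoc]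
    exact Dvd.dvd.mul_right (dvd_two_mul_div_gcd_two m) _
  refine ⟨Tn m n i ^ a * Tn m n j ^ a,
    mul_mem_Fset_of_mem_Fset_zero (Tn_pow_mem_Fset_zero i a) (Tn_pow_mem_Fset_zero j a), ?_⟩
  conv_lhs => rw [← Nat.mod_add_div l K, pow_add, mul_assoc, Tn_pow_mul_CXn ha]
  rw [mul_assoc]

lemma exists_phaseEq_Tn_pow_mul_CXn_mul (hm : 0 < m) (hU : U ∈ Fset m n (r + 1)) :
    ∃ i j, i ≠ j ∧ ∃ l < m / Nat.gcd m 2, ∃ W ∈ Fset m n r,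
      PhaseEq U (Tn m n j ^ l * CXn n i j * W) := by
  obtain ⟨A, hA, i, j, hij, W, hW, rfl⟩ := exists_eq_mul_CXn_mul_of_mem_Fset_succ hU
  obtain ⟨c, hc, l, B, hB, hAB⟩ := exists_mul_CXn_eq_smul hm hij hA
  obtain ⟨B', hB', hlB'⟩ := exists_Tn_pow_mul_CXn_eq_mod hm i j l
  have hK : 0 < m / Nat.gcd m 2 :=
    Nat.div_pos (Nat.gcd_le_left 2 hm) (Nat.gcd_pos_of_pos_left 2 hm)
  refine ⟨i, j, hij, _, Nat.mod_lt l hK, B' * (B * W),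
    mul_mem_Fset_of_mem_Fset_zero hB' (mul_mem_Fset_of_mem_Fset_zero hB hW), c, hc, ?_⟩
  rw [hAB, hlB', smul_mul_assoc]
  simp only [mul_assoc]

end NormalForm

section PhaseClasses

lemma phaseEq_equivalence {α : Type*} : Equivalence (PhaseEq (α := α)) where
  refl U := ⟨1, one_ne_zero, (one_smul ℂ U).symm⟩
  symm := by
    rintro U V ⟨c, hc, rfl⟩
    exact ⟨c⁻¹, inv_ne_zero hc, by rw [smul_smul, inv_mul_cancel₀ hc, one_smul]⟩
  trans := by
    rintro U V W ⟨c, hc, rfl⟩ ⟨d, hd, rfl⟩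
    exact ⟨c * d, mul_ne_zero hc hd, smul_smul c d W⟩

lemma PhaseEq.mul_left {α : Type*} [Fintype α] [DecidableEq α] {U V : Matrix α α ℂ}
    (M : Matrix α α ℂ) (h : PhaseEq U V) : PhaseEq (M * U) (M * V) := by
  obtain ⟨c, hc, rfl⟩ := h
  exact ⟨c, hc, mul_smul_comm c M V⟩

abbrev PhaseClasses (m n r : ℕ) := Quot fun (U V : Fset m n r) => PhaseEq U.1 V.1

variable {r s : ℕ}

def PhaseClasses.leftMul (M : Matrix (Fin n → ZMod 2) (Fin n → ZMod 2) ℂ)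
    (hM : ∀ W ∈ Fset m n r, M * W ∈ Fset m n s) : PhaseClasses m n r → PhaseClasses m n s :=
  Quot.map (fun W => ⟨M * W, hM W W.2⟩) fun _ _ h => h.mul_left M

lemma PhaseClasses.leftMul_injective {M M' : Matrix (Fin n → ZMod 2) (Fin n → ZMod 2) ℂ}
    (hM' : M' * M = 1) (hM : ∀ W ∈ Fset m n r, M * W ∈ Fset m n s) :
    Injective (PhaseClasses.leftMul M hM) := by
  rintro ⟨U⟩ ⟨V⟩ h
  have hMUV : PhaseEq (M * U.1) (M * V.1) :=
    (InvImage.equivalence _ Subtype.val phaseEq_equivalence).eqvGen_iff.mp (Quot.eqvGen_exact h)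
  apply Quot.sound
  simpa [← mul_assoc, hM'] using hMUV.mul_left M'

def PhaseClasses.mulTnPowCXn :
    (Fin (m / Nat.gcd m 2) × {p : Fin n × Fin n // p.1 ≠ p.2}) × PhaseClasses m n r →
      PhaseClasses m n (r + 1)
  | ((l, ⟨(i, j), hij⟩), W) => PhaseClasses.leftMul (Tn m n j ^ (l : ℕ) * CXn n i j)
      (fun _ hW => by
        rw [mul_assoc]
        exact mul_mem_Fset_of_mem_Fset_zero (Tn_pow_mem_Fset_zero j l)
          (CXn_mul_mem_Fset_succ hij hW))
      W

lemma PhaseClasses.mulTnPowCXn_surjective (hm : 0 < m) :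
    Surjective (PhaseClasses.mulTnPowCXn (m := m) (n := n) (r := r)) := by
  rintro ⟨U, hU⟩
  obtain ⟨i, j, hij, l, hl, W, hW, hUW⟩ := exists_phaseEq_Tn_pow_mul_CXn_mul hm hU
  refine ⟨((⟨l, hl⟩, ⟨(i, j), hij⟩), Quot.mk _ ⟨W, hW⟩), Quot.sound ?_⟩
  exact phaseEq_equivalence.symm hUW

end PhaseClasses

lemma Nat.card_subtype_fst_ne_snd (α : Type*) [Fintype α] [DecidableEq α] :
    Nat.card {p : α × α // p.1 ≠ p.2} = Nat.card α ^ 2 - Nat.card α := by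
  rw [Nat.card_eq_fintype_card, Fintype.card_subtype, Nat.card_eq_fintype_card, sq,
    ← Finset.card_univ, ← Finset.offDiag_card]
  congr 1
  ext p
  simp

/-- If `β` is infinite then `Nat.card β = 0`, so `γ` must be empty or infinite; `hinj` ensures
that. -/
lemma Nat.card_le_card_mul_card_of_surjective {α β γ : Type*} [Finite α] (f : α × β → γ)
    (hf : Surjective f) (hinj : Nonempty γ → ∃ g : β → γ, Injective g) :
    Nat.card γ ≤ Nat.card α * Nat.card β := by
  rcases finite_or_infinite β with hβ | hβ
  · rw [← Nat.card_prod]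
    exact Nat.card_le_card_of_surjective f hf
  rcases isEmpty_or_nonempty γ with hγ | hγ
  · simp
  obtain ⟨g, hg⟩ := hinj hγ
  have := Infinite.of_injective g hg
  simp

theorem F_succ_card_bound_general (m n : ℕ) (hm : 0 < m) (r : ℕ) :
    Nat.card (Quot (fun (U V : Fset m n (r + 1)) => PhaseEq U.1 V.1)) ≤
      m * (n ^ 2 - n) / Nat.gcd m 2 *
        Nat.card (Quot (fun (U V : Fset m n r) => PhaseEq U.1 V.1)) := by
  have hcard : Nat.card (Fin (m / Nat.gcd m 2) × {p : Fin n × Fin n // p.1 ≠ p.2}) =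
      m * (n ^ 2 - n) / Nat.gcd m 2 := by
    rw [Nat.card_prod, Nat.card_subtype_fst_ne_snd, Nat.card_fin, Nat.card_fin]
    exact Nat.div_mul_right_comm (Nat.gcd_dvd_left m 2) _
  rw [← hcard]
  refine Nat.card_le_card_mul_card_of_surjective _ (PhaseClasses.mulTnPowCXn_surjective hm) ?_
  rintro ⟨⟨U, hU⟩⟩
  obtain ⟨-, -, i, j, hij, -⟩ := exists_eq_mul_CXn_mul_of_mem_Fset_succ hU
  exact ⟨_, PhaseClasses.leftMul_injective (CXn_mul_self hij)
    fun _ => CXn_mul_mem_Fset_succ hij⟩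

theorem F_succ_card_bound (m n : ℕ) (hm : 0 < m) (hn : 0 < n) (r : ℕ) :
    Nat.card (Quot (fun (U V : Fset m n (r + 1)) => PhaseEq U.1 V.1)) ≤
      m * (n ^ 2 - n) / Nat.gcd m 2 *
        Nat.card (Quot (fun (U V : Fset m n r) => PhaseEq U.1 V.1)) :=
  F_succ_card_bound_general m n hm r

end
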